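/- Let h be a homeomorphism of the Cantor space such that for every m ∈ ℕ there is a partition P_m of mesh < 1/m each of whose components in Γ(h,P_m) is a dumbbell. Then h has no Li–Yorke pair; that is, there is no pair (σ,τ) of points with liminf_{n→∞} d(hⁿ(σ),hⁿ(τ)) = 0 and limsup_{n→∞} d(hⁿ(σ),hⁿ(τ)) > 0. -/

import Mathlib

noncomputable def cantorDist (σ τ : ℕ → Bool) : ℝ :=
  letI := Classical.propDecidable (∃ n, σ n ≠ τ n)
  if h : ∃ n, σ n ≠ τ n then 1 / (Nat.find h + 1) else 0

def IsPartition (P : Finset (Set (ℕ → Bool))) : Prop :=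
  (∀ a ∈ P, IsClopen a ∧ a.Nonempty) ∧
  (∀ a ∈ P, ∀ b ∈ P, a ≠ b → Disjoint a b) ∧
  ⋃₀ (P : Set (Set (ℕ → Bool))) = Set.univ

noncomputable def cantorDiam (A : Set (ℕ → Bool)) : ℝ :=
  sSup {r | ∃ σ ∈ A, ∃ τ ∈ A, r = cantorDist σ τ}

noncomputable def mesh (C : Set (Set (ℕ → Bool))) : ℝ :=
  sSup (cantorDiam '' C)

def gammaEdge (f : (ℕ → Bool) → (ℕ → Bool)) (a b : Set (ℕ → Bool)) : Prop :=
  (f '' a ∩ b).Nonempty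

def balloonEdge (s m : ℕ) (a b : Fin (s + m)) : Prop :=
  b.val = a.val + 1 ∨ (a.val = s + m - 1 ∧ b.val = s)

def dumbbellEdge (r s t : ℕ) (a b : Fin (r + s + t)) : Prop :=
  (b.val = a.val + 1 ∧ a.val + 1 ≠ r) ∨
  (a.val = r - 1 ∧ b.val = 0) ∨
  (a.val = 0 ∧ b.val = r) ∨
  (a.val = r + s + t - 1 ∧ b.val = r + s)

/-- Every component of `Γ(h,P)` is a dumbbell. -/
def AllComponentsDumbbells (h : (ℕ → Bool) → (ℕ → Bool))
    (P : Finset (Set (ℕ → Bool))) : Prop :=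
  ∃ (k : ℕ) (r s t : Fin k → ℕ),
    (∀ i, 0 < r i) ∧ (∀ i, 0 < s i) ∧ (∀ i, 0 < t i) ∧
    ∃ e : {a // a ∈ P} ≃ (Σ i : Fin k, Fin (r i + s i + t i)),
      ∀ a b : {a // a ∈ P}, gammaEdge h a.val b.val ↔
        ∃ heq : (e a).1 = (e b).1,
          dumbbellEdge (r (e b).1) (s (e b).1) (t (e b).1)
            (Fin.cast (by rw [heq]) (e a).2) (e b).2

/-!
Distinct parts of a clopen partition of the Cantor space are a positive distance apart, so if
`liminf d(hⁿσ, hⁿτ) = 0` the orbits of `σ` and `τ` lie in a common part of `P_m` infinitely often.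
The sequences of parts they visit are walks in `Γ(h, P_m)`, a disjoint union of dumbbells. Two
walks in a dumbbell can only merge on the bar or the second cycle, which is never left and on which
every vertex has a single successor; so once the orbits share a part they share one forever, and
`limsup d(hⁿσ, hⁿτ) ≤ mesh P_m < 1/m`. As `m` is arbitrary, the limsup vanishes.
-/

open Filter

open PiNat in
theorem exists_cylinder_subset_of_isOpen_cover {E : ℕ → Type*} [∀ n, TopologicalSpace (E n)]
    [∀ n, DiscreteTopology (E n)] {ι : Sort*} {K : Set (∀ n, E n)} (hK : IsCompact K)
    {c : ι → Set (∀ n, E n)} (hc : ∀ i, IsOpen (c i)) (hcover : K ⊆ ⋃ i, c i) :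
    ∃ N, ∀ x ∈ K, ∃ i, cylinder x N ⊆ c i := by
  -- the metric `(1/2) ^ firstDiff x y`, whose topology is the product topology
  let _ : MetricSpace (∀ n, E n) := PiNat.metricSpace
  obtain ⟨δ, hδ, hball⟩ := lebesgue_number_lemma_of_metric hK hc hcover
  obtain ⟨N, hN⟩ := exists_pow_lt_of_lt_one hδ one_half_lt_one
  refine ⟨N, fun x hx => ?_⟩
  obtain ⟨i, hi⟩ := hball x hx
  exact ⟨i, fun y hy => hi ((mem_cylinder_iff_dist_le.1 hy).trans_lt hN)⟩

theorem cantorDist_nonneg (σ τ : ℕ → Bool) : 0 ≤ cantorDist σ τ := by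
  unfold cantorDist
  split_ifs <;> positivity

theorem cantorDist_le_one (σ τ : ℕ → Bool) : cantorDist σ τ ≤ 1 := by
  unfold cantorDist
  split_ifs
  · exact div_le_one_of_le₀ (by simp) (by positivity)
  · exact zero_le_one

theorem one_div_le_cantorDist {σ τ : ℕ → Bool} {i : ℕ} (hi : σ i ≠ τ i) :
    1 / ((i : ℝ) + 1) ≤ cantorDist σ τ := by
  classical
  have hex : ∃ n, σ n ≠ τ n := ⟨i, hi⟩
  rw [cantorDist, dif_pos hex]
  gcongr
  exact Nat.find_min' hex hi

theorem mem_cylinder_of_cantorDist_lt {σ τ : ℕ → Bool} {N : ℕ}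
    (h : cantorDist σ τ < 1 / ((N : ℝ) + 1)) : τ ∈ PiNat.cylinder σ N := by
  refine PiNat.mem_cylinder_iff.2 fun i hi => by_contra fun hne => h.not_ge ?_
  calc 1 / ((N : ℝ) + 1) ≤ 1 / ((i : ℝ) + 1) := by gcongr
    _ ≤ cantorDist σ τ := one_div_le_cantorDist (Ne.symm hne)

theorem cantorDist_le_cantorDiam {A : Set (ℕ → Bool)} {σ τ : ℕ → Bool} (hσ : σ ∈ A) (hτ : τ ∈ A) :
    cantorDist σ τ ≤ cantorDiam A :=
  le_csSup ⟨1, by rintro _ ⟨σ, -, τ, -, rfl⟩; exact cantorDist_le_one σ τ⟩ ⟨σ, hσ, τ, hτ, rfl⟩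

theorem cantorDiam_le_mesh {C : Set (Set (ℕ → Bool))} (hC : C.Finite) {A : Set (ℕ → Bool)}
    (hA : A ∈ C) : cantorDiam A ≤ mesh C :=
  le_csSup (hC.image _).bddAbove (Set.mem_image_of_mem _ hA)

namespace IsPartition

variable {P : Finset (Set (ℕ → Bool))}

theorem exists_mem (hP : IsPartition P) (x : ℕ → Bool) : ∃ a ∈ P, x ∈ a := by
  have hx : x ∈ ⋃₀ (P : Set (Set (ℕ → Bool))) := hP.2.2 ▸ Set.mem_univ x
  simpa using hx

theorem eq_of_mem (hP : IsPartition P) {a b : Set (ℕ → Bool)} (ha : a ∈ P) (hb : b ∈ P)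
    {x : ℕ → Bool} (hxa : x ∈ a) (hxb : x ∈ b) : a = b :=
  by_contra fun hab => (hP.2.1 a ha b hb hab).notMem_of_mem_left hxa hxb

theorem exists_forall_cantorDist_lt (hP : IsPartition P) :
    ∃ δ > 0, ∀ x y, cantorDist x y < δ → ∃ a ∈ P, x ∈ a ∧ y ∈ a := by
  have hcover : Set.univ ⊆ ⋃ a : {a // a ∈ P}, a.val := fun x _ => by
    obtain ⟨a, ha, hx⟩ := hP.exists_mem x
    exact Set.mem_iUnion.2 ⟨⟨a, ha⟩, hx⟩
  obtain ⟨N, hN⟩ := exists_cylinder_subset_of_isOpen_cover isCompact_univ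
    (fun a : {a // a ∈ P} => (hP.1 a.1 a.2).1.isOpen) hcover
  refine ⟨1 / ((N : ℝ) + 1), by positivity, fun x y hxy => ?_⟩
  obtain ⟨a, ha⟩ := hN x trivial
  exact ⟨a, a.2, ha (PiNat.self_mem_cylinder x N), ha (mem_cylinder_of_cantorDist_lt hxy)⟩

end IsPartition

section Walks

variable {V : Type*} {E : V → V → Prop} {B : Set V} {x y : ℕ → V}

theorem eq_and_mem_of_eq_of_mem
    (hfun : ∀ a ∈ B, ∀ b b', E a b → E a b' → b = b') (hclosed : ∀ a ∈ B, ∀ b, E a b → b ∈ B)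
    (hx : ∀ n, E (x n) (x (n + 1))) (hy : ∀ n, E (y n) (y (n + 1)))
    {m : ℕ} (hm : x m = y m) (hB : x m ∈ B) {n : ℕ} (hmn : m ≤ n) : x n = y n ∧ x n ∈ B := by
  induction n, hmn using Nat.le_induction with
  | base => exact ⟨hm, hB⟩
  | succ n _ ih =>
    obtain ⟨heq, hmem⟩ := ih
    exact ⟨hfun _ hmem _ _ (hx n) (heq ▸ hy n), hclosed _ hmem _ (hx n)⟩

theorem eventually_eq_of_frequently_eq
    (hfun : ∀ a ∈ B, ∀ b b', E a b → E a b' → b = b') (hclosed : ∀ a ∈ B, ∀ b, E a b → b ∈ B)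
    (hmerge : ∀ a a' c, a ≠ a' → E a c → E a' c → c ∈ B)
    (hx : ∀ n, E (x n) (x (n + 1))) (hy : ∀ n, E (y n) (y (n + 1)))
    (hfreq : ∃ᶠ n in atTop, x n = y n) : ∀ᶠ n in atTop, x n = y n := by
  by_cases hne : ∃ n, x n ≠ y n
  · obtain ⟨n, hn⟩ := hne
    obtain ⟨m, hnm, hm⟩ := frequently_atTop.1 hfreq n
    obtain ⟨k, hk, hk1⟩ := Nat.exists_not_and_succ_of_not_zero_of_exists
      (p := fun k => x (n + k) = y (n + k)) hn ⟨m - n, by simpa [Nat.add_sub_cancel' hnm]⟩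
    have hB : x (n + k + 1) ∈ B := hmerge _ _ _ hk (hx _) (hk1 ▸ hy _)
    exact eventually_atTop.2
      ⟨n + k + 1, fun _ hl => (eq_and_mem_of_eq_of_mem hfun hclosed hx hy hk1 hB hl).1⟩
  · push Not at hne
    exact Eventually.of_forall hne

end Walks

def sigmaDumbbellEdge {k : ℕ} (r s t : Fin k → ℕ) (a b : Σ i, Fin (r i + s i + t i)) : Prop :=
  ∃ heq : a.1 = b.1, dumbbellEdge (r b.1) (s b.1) (t b.1) (Fin.cast (by rw [heq]) a.2) b.2

namespace sigmaDumbbellEdge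

variable {k : ℕ} {r s t : Fin k → ℕ}

theorem fst_eq {a b : Σ i, Fin (r i + s i + t i)} (h : sigmaDumbbellEdge r s t a b) :
    a.1 = b.1 :=
  h.1

theorem mk_mk_iff {i : Fin k} {a b : Fin (r i + s i + t i)} :
    sigmaDumbbellEdge r s t ⟨i, a⟩ ⟨i, b⟩ ↔ dumbbellEdge (r i) (s i) (t i) a b :=
  ⟨fun ⟨_, h⟩ => h, fun h => ⟨rfl, h⟩⟩

theorem eq_of_le {a b b' : Σ i, Fin (r i + s i + t i)} (hr : 0 < r a.1) (ha : r a.1 ≤ a.2)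
    (hb : sigmaDumbbellEdge r s t a b) (hb' : sigmaDumbbellEdge r s t a b') : b = b' := by
  obtain ⟨i, a⟩ := a
  obtain ⟨j, b⟩ := b
  obtain ⟨j', b'⟩ := b'
  obtain rfl : i = j := hb.fst_eq
  obtain rfl : i = j' := hb'.fst_eq
  rw [mk_mk_iff] at hb hb'
  simp only [dumbbellEdge] at hr ha hb hb'
  simp only [Sigma.mk.inj_iff, heq_eq_eq, true_and, Fin.ext_iff]
  omega

theorem le_of_le {a b : Σ i, Fin (r i + s i + t i)} (ha : r a.1 ≤ a.2)
    (hb : sigmaDumbbellEdge r s t a b) : r b.1 ≤ b.2 := by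
  obtain ⟨i, a⟩ := a
  obtain ⟨j, b⟩ := b
  obtain rfl : i = j := hb.fst_eq
  rw [mk_mk_iff] at hb
  simp only [dumbbellEdge] at ha hb ⊢
  omega

theorem le_of_ne {a a' c : Σ i, Fin (r i + s i + t i)}
    (hne : a ≠ a') (ha : sigmaDumbbellEdge r s t a c) (ha' : sigmaDumbbellEdge r s t a' c) :
    r c.1 ≤ c.2 := by
  obtain ⟨i, a⟩ := a
  obtain ⟨i', a'⟩ := a'
  obtain ⟨j, c⟩ := c
  obtain rfl : i = j := ha.fst_eq
  obtain rfl : i = i' := ha'.fst_eq.symm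
  rw [mk_mk_iff] at ha ha'
  have hne : a.val ≠ a'.val := fun h => hne (by rw [Fin.ext h])
  simp only [dumbbellEdge] at ha ha' ⊢
  omega

end sigmaDumbbellEdge

theorem gammaEdge_of_mem {f : (ℕ → Bool) → (ℕ → Bool)} {a b : Set (ℕ → Bool)} {x : ℕ → Bool}
    (hx : x ∈ a) (hfx : f x ∈ b) : gammaEdge f a b :=
  ⟨f x, ⟨x, hx, rfl⟩, hfx⟩

theorem AllComponentsDumbbells.eventually_of_frequently {f : (ℕ → Bool) → (ℕ → Bool)}
    {P : Finset (Set (ℕ → Bool))} (hP : IsPartition P) (hf : AllComponentsDumbbells f P)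
    {σ τ : ℕ → Bool} (hfreq : ∃ᶠ n in atTop, ∃ a ∈ P, f^[n] σ ∈ a ∧ f^[n] τ ∈ a) :
    ∀ᶠ n in atTop, ∃ a ∈ P, f^[n] σ ∈ a ∧ f^[n] τ ∈ a := by
  obtain ⟨k, r, s, t, hr, -, -, e, he⟩ := hf
  choose g hgP hg using hP.exists_mem
  let X (ρ : ℕ → Bool) (n : ℕ) : Σ i, Fin (r i + s i + t i) := e ⟨g (f^[n] ρ), hgP _⟩
  have hwalk (ρ : ℕ → Bool) (n : ℕ) : sigmaDumbbellEdge r s t (X ρ n) (X ρ (n + 1)) :=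
    (he _ _).1 (gammaEdge_of_mem (hg _) (by rw [Function.iterate_succ_apply']; exact hg _))
  have hsame (n : ℕ) : X σ n = X τ n ↔ ∃ a ∈ P, f^[n] σ ∈ a ∧ f^[n] τ ∈ a := by
    rw [e.apply_eq_iff_eq, Subtype.mk.injEq]
    constructor
    · exact fun hcell => ⟨_, hgP _, hg _, hcell ▸ hg _⟩
    · rintro ⟨a, ha, hσ, hτ⟩
      rw [hP.eq_of_mem (hgP _) ha (hg _) hσ, hP.eq_of_mem (hgP _) ha (hg _) hτ]
  simp only [← hsame] at hfreq ⊢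
  -- indices `≥ r` form the bar and the second cycle of each dumbbell
  exact eventually_eq_of_frequently_eq (B := {a : Σ i, Fin (r i + s i + t i) | r a.1 ≤ a.2})
    (fun a ha _ _ => sigmaDumbbellEdge.eq_of_le (a := a) (hr a.1) ha)
    (fun a ha _ => sigmaDumbbellEdge.le_of_le (a := a) ha)
    (fun _ _ _ => sigmaDumbbellEdge.le_of_ne) (hwalk σ) (hwalk τ) hfreq

theorem no_LiYorke_pair (h : (ℕ → Bool) ≃ₜ (ℕ → Bool))
    (hyp : ∀ m : ℕ, 0 < m → ∃ P : Finset (Set (ℕ → Bool)), IsPartition P ∧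
      mesh (↑P : Set (Set (ℕ → Bool))) < 1 / (m : ℝ) ∧ AllComponentsDumbbells (⇑h) P) :
    ∀ σ τ : ℕ → Bool,
      ¬(Filter.liminf (fun n => cantorDist ((⇑h)^[n] σ) ((⇑h)^[n] τ)) Filter.atTop = 0 ∧
        0 < Filter.limsup (fun n => cantorDist ((⇑h)^[n] σ) ((⇑h)^[n] τ)) Filter.atTop) := by
  rintro σ τ ⟨hliminf, hlimsup⟩
  set u := fun n => cantorDist ((⇑h)^[n] σ) ((⇑h)^[n] τ)
  obtain ⟨m, hm⟩ := exists_nat_one_div_lt hlimsup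
  obtain ⟨P, hP, hmesh, hdumb⟩ := hyp (m + 1) m.succ_pos
  obtain ⟨δ, hδ, hclose⟩ := hP.exists_forall_cantorDist_lt
  have hfreq : ∃ᶠ n in atTop, ∃ a ∈ P, (⇑h)^[n] σ ∈ a ∧ (⇑h)^[n] τ ∈ a :=
    (frequently_lt_of_liminf_lt
      (isCoboundedUnder_ge_of_le _ fun n => cantorDist_le_one _ _)
      (hliminf ▸ hδ)).mono fun n hn => hclose _ _ hn
  have hsmall : ∀ᶠ n in atTop, u n ≤ mesh (↑P : Set (Set (ℕ → Bool))) :=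
    (hdumb.eventually_of_frequently hP hfreq).mono fun n ⟨a, ha, hσ, hτ⟩ =>
      (cantorDist_le_cantorDiam hσ hτ).trans (cantorDiam_le_mesh P.finite_toSet ha)
  have hlimsup_le := limsup_le_of_le
    (isCoboundedUnder_le_of_le _ fun n => cantorDist_nonneg _ _) hsmall
  push_cast at hmesh
  linarith
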